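/- Let X be a measurable space with a σ-finite measure ν, P a nonempty finite index set, and for each p ∈ P let μ_p be a probability measure on X × ℝ with ∫ y² dμ_p < ∞, whose marginal ρ_p on X satisfies ρ_p ≪ ν with density w_p = dρ_p/dν. For each p let f_p : X → ℝ be measurable with ∫ f_p² dρ_p < ∞ minimizing f ↦ ∫ (f(x) − y)² dμ_p(x,y) over all measurable f : X → ℝ. Fix λ ∈ Δ^P and define f_λ : X → ℝ by f_λ(x) = (Σ_{p∈P} λ_p w_p(x) f_p(x)) / (Σ_{q∈P} λ_q w_q(x)) when Σ_{q∈P} λ_q w_q(x) > 0, and f_λ(x) = 0 otherwise. Then f_λ minimizes f ↦ ∫ (f(x) − y)² d(Σ_{p∈P} λ_p μ_p)(x,y) over all measurable f : X → ℝ. -/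

import Mathlib

/-!
The Bayes optimal predictor `f p` makes its residual orthogonal to every square-integrable
function of `x` (first variation of the risk), so every predictor `u` has
`R_p(u) = R_p(f_p) + ∫ (u - f_p)² dρ_p`. With `ρ_p = w_p ν`, the mixture risk of `u` is
`Σ_p λ_p R_p(f_p) + ∫ Σ_p λ_p w_p(x) (u(x) - f_p(x))² dν(x)`, and the integrand is minimised
pointwise by the mean of the values `f_p(x)` weighted by `λ_p w_p(x)`, which is `f_λ(x)`.
-/

open MeasureTheory
open scoped BigOperators ENNReal Classical

/-- The mean-squared-error risk of predictor `f` under a joint distribution `μ` on `X × ℝ`,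
valued in `[0, ∞]`. -/
noncomputable def mseRisk {X : Type*} [MeasurableSpace X]
    (μ : Measure (X × ℝ)) (f : X → ℝ) : ℝ≥0∞ :=
  ∫⁻ z, ENNReal.ofReal ((f z.1 - z.2) ^ 2) ∂μ

namespace Finset

variable {ι : Type*} (s : Finset ι) {a : ι → ℝ}

-- `centerMass` divides by a zero total weight as `0⁻¹ = 0`, matching the `else 0` branch.
theorem centerMass_eq_ite (ha : ∀ i ∈ s, 0 ≤ a i) (v : ι → ℝ) :
    s.centerMass a v = if 0 < ∑ i ∈ s, a i then (∑ i ∈ s, a i * v i) / ∑ i ∈ s, a i else 0 := by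
  split_ifs with hpos
  · rw [centerMass, smul_eq_mul, div_eq_inv_mul]
    rfl
  · have hzero : ∑ i ∈ s, a i = 0 := le_antisymm (not_lt.1 hpos) (sum_nonneg ha)
    simp [centerMass, hzero]

theorem centerMass_mul_sum (ha : ∀ i ∈ s, 0 ≤ a i) (v : ι → ℝ) :
    s.centerMass a v * ∑ i ∈ s, a i = ∑ i ∈ s, a i * v i := by
  rcases (sum_nonneg ha).eq_or_lt with hW | hW
  · have hzero : ∀ i ∈ s, a i = 0 := (sum_eq_zero_iff_of_nonneg ha).1 hW.symm
    rw [← hW, mul_zero, eq_comm]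
    exact sum_eq_zero fun i hi => by rw [hzero i hi, zero_mul]
  · simp only [centerMass, smul_eq_mul]
    field_simp

theorem sum_mul_sq_centerMass_sub_le (ha : ∀ i ∈ s, 0 ≤ a i) (v : ι → ℝ) (t : ℝ) :
    ∑ i ∈ s, a i * (s.centerMass a v - v i) ^ 2 ≤ ∑ i ∈ s, a i * (t - v i) ^ 2 := by
  have hmean := s.centerMass_mul_sum ha v
  have expand : ∀ c : ℝ, ∑ i ∈ s, a i * (c - v i) ^ 2
      = (∑ i ∈ s, a i) * (c - s.centerMass a v) ^ 2
        + (∑ i ∈ s, a i * v i ^ 2 - s.centerMass a v ^ 2 * ∑ i ∈ s, a i) := by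
    intro c
    calc ∑ i ∈ s, a i * (c - v i) ^ 2
        = ∑ i ∈ s, (c ^ 2 * a i - 2 * c * (a i * v i) + a i * v i ^ 2) :=
          sum_congr rfl fun i _ => by ring
      _ = c ^ 2 * ∑ i ∈ s, a i - 2 * c * ∑ i ∈ s, a i * v i + ∑ i ∈ s, a i * v i ^ 2 := by
          rw [sum_add_distrib, sum_sub_distrib, ← mul_sum, ← mul_sum]
      _ = _ := by
          rw [← hmean]
          ring
  rw [expand, expand, sub_self, zero_pow two_ne_zero, mul_zero, zero_add]
  exact le_add_of_nonneg_left (mul_nonneg (sum_nonneg ha) (sq_nonneg _))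

end Finset

section Pythagoras

variable {α : Type*} {m : MeasurableSpace α} {μ : Measure α}

theorem memLp_two_iff_lintegral_ofReal_sq_lt_top {g : α → ℝ} (hg : AEStronglyMeasurable g μ) :
    MemLp g 2 μ ↔ ∫⁻ x, ENNReal.ofReal (g x ^ 2) ∂μ < ∞ := by
  rw [memLp_two_iff_integrable_sq hg, Integrable,
    hasFiniteIntegral_iff_ofReal (ae_of_all _ fun _ => sq_nonneg _)]
  exact and_iff_right (hg.pow 2)

theorem integral_add_sq_of_forall_integral_sq_le {r h : α → ℝ} (hr : MemLp r 2 μ)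
    (hh : MemLp h 2 μ) (hmin : ∀ t : ℝ, ∫ x, r x ^ 2 ∂μ ≤ ∫ x, (r x + t * h x) ^ 2 ∂μ) :
    ∫ x, (r x + h x) ^ 2 ∂μ = ∫ x, r x ^ 2 ∂μ + ∫ x, h x ^ 2 ∂μ := by
  have hrh : Integrable (fun x => r x * h x) μ := hr.integrable_mul hh
  have expand : ∀ t : ℝ, ∫ x, (r x + t * h x) ^ 2 ∂μ
      = ∫ x, r x ^ 2 ∂μ + ((∫ x, h x ^ 2 ∂μ) * (t * t) + (2 * ∫ x, r x * h x ∂μ) * t) := by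
    intro t
    calc ∫ x, (r x + t * h x) ^ 2 ∂μ
        = ∫ x, r x ^ 2 + (t * t * h x ^ 2 + 2 * t * (r x * h x)) ∂μ :=
          integral_congr_ae (ae_of_all _ fun x => by ring)
      _ = ∫ x, r x ^ 2 ∂μ + ((∫ x, t * t * h x ^ 2 ∂μ) + ∫ x, 2 * t * (r x * h x) ∂μ) := by
          rw [integral_add hr.integrable_sq, integral_add]
          exacts [hh.integrable_sq.const_mul _, hrh.const_mul _,
            (hh.integrable_sq.const_mul _).add (hrh.const_mul _)]
      _ = _ := by
          rw [integral_const_mul, integral_const_mul]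
          ring
  have hdiscrim := discrim_le_zero (a := ∫ x, h x ^ 2 ∂μ) (b := 2 * ∫ x, r x * h x ∂μ) (c := 0)
    fun t => by linarith [hmin t, expand t]
  have hcross : ∫ x, r x * h x ∂μ = 0 := by
    rw [discrim] at hdiscrim
    nlinarith [sq_nonneg (∫ x, r x * h x ∂μ)]
  simpa [hcross] using expand 1

end Pythagoras

section MseRisk

variable {X : Type*} [MeasurableSpace X]

theorem mseRisk_lt_top_iff_memLp {μ : Measure (X × ℝ)} {u : X → ℝ} (hu : Measurable u) :
    mseRisk μ u < ∞ ↔ MemLp (fun z : X × ℝ => u z.1 - z.2) 2 μ :=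
  (memLp_two_iff_lintegral_ofReal_sq_lt_top (by fun_prop)).symm

theorem mseRisk_eq_ofReal_integral {μ : Measure (X × ℝ)} {u : X → ℝ}
    (hu : MemLp (fun z : X × ℝ => u z.1 - z.2) 2 μ) :
    mseRisk μ u = ENNReal.ofReal (∫ z, (u z.1 - z.2) ^ 2 ∂μ) :=
  (ofReal_integral_eq_lintegral_ofReal hu.integrable_sq (ae_of_all _ fun _ => sq_nonneg _)).symm

theorem mseRisk_lt_top {μ : Measure (X × ℝ)} {f : X → ℝ} (hf : Measurable f)
    (hfL2 : ∫⁻ x, ENNReal.ofReal (f x ^ 2) ∂(μ.map Prod.fst) < ∞)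
    (hY : ∫⁻ z, ENNReal.ofReal (z.2 ^ 2) ∂μ < ∞) :
    mseRisk μ f < ∞ := by
  rw [lintegral_map (by fun_prop) measurable_fst] at hfL2
  rw [mseRisk_lt_top_iff_memLp hf]
  exact ((memLp_two_iff_lintegral_ofReal_sq_lt_top
    (hf.comp measurable_fst).aestronglyMeasurable).2 hfL2).sub
    ((memLp_two_iff_lintegral_ofReal_sq_lt_top (by fun_prop)).2 hY)

theorem mseRisk_sum_smul {ι : Type*} (s : Finset ι) (c : ι → ℝ≥0∞) (μ : ι → Measure (X × ℝ))
    (u : X → ℝ) : mseRisk (∑ i ∈ s, c i • μ i) u = ∑ i ∈ s, c i * mseRisk (μ i) u := by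
  simp only [mseRisk, lintegral_finsetSum_measure, lintegral_smul_measure, smul_eq_mul]

theorem mseRisk_eq_add_of_forall_mseRisk_le {μ : Measure (X × ℝ)} {f u : X → ℝ}
    (hf : Measurable f) (hu : Measurable u) (hfin : mseRisk μ f < ∞)
    (hopt : ∀ g : X → ℝ, Measurable g → mseRisk μ f ≤ mseRisk μ g) :
    mseRisk μ u = mseRisk μ f + ∫⁻ x, ENNReal.ofReal ((u x - f x) ^ 2) ∂(μ.map Prod.fst) := by
  rw [lintegral_map (by fun_prop) measurable_fst]
  have hr := (mseRisk_lt_top_iff_memLp hf).1 hfin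
  by_cases hh : MemLp (fun z : X × ℝ => u z.1 - f z.1) 2 μ
  · have hmin : ∀ t : ℝ, ∫ z, (f z.1 - z.2) ^ 2 ∂μ
        ≤ ∫ z, (f z.1 - z.2 + t * (u z.1 - f z.1)) ^ 2 ∂μ := by
      intro t
      have hopt_t := hopt (fun x => f x + t * (u x - f x)) (by fun_prop)
      have hrt : MemLp (fun z : X × ℝ => f z.1 + t * (u z.1 - f z.1) - z.2) 2 μ :=
        (hr.add (hh.const_mul t)).ae_eq (ae_of_all _ fun z => by simp only [Pi.add_apply]; ring)
      rw [mseRisk_eq_ofReal_integral hr, mseRisk_eq_ofReal_integral hrt,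
        ENNReal.ofReal_le_ofReal_iff (integral_nonneg fun _ => sq_nonneg _)] at hopt_t
      convert hopt_t using 4 with z
      ring
    have hu' : MemLp (fun z : X × ℝ => u z.1 - z.2) 2 μ :=
      (hr.add hh).ae_eq (ae_of_all _ fun z => by simp only [Pi.add_apply]; ring)
    rw [mseRisk_eq_ofReal_integral hu', mseRisk_eq_ofReal_integral hr,
      ← ofReal_integral_eq_lintegral_ofReal hh.integrable_sq (ae_of_all _ fun _ => sq_nonneg _),
      ← ENNReal.ofReal_add (integral_nonneg fun _ => sq_nonneg _)
        (integral_nonneg fun _ => sq_nonneg _),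
      ← integral_add_sq_of_forall_integral_sq_le hr hh hmin]
    congr 2 with z
    ring
  · have hh_top : ∫⁻ z, ENNReal.ofReal ((u z.1 - f z.1) ^ 2) ∂μ = ∞ :=
      not_lt_top_iff.1 (mt (memLp_two_iff_lintegral_ofReal_sq_lt_top (by fun_prop)).2 hh)
    have hu_top : mseRisk μ u = ∞ := by
      refine not_lt_top_iff.1 fun hu_fin => hh ?_
      exact (((mseRisk_lt_top_iff_memLp hu).1 hu_fin).sub hr).ae_eq
        (ae_of_all _ fun z => by simp only [Pi.sub_apply]; ring)
    rw [hh_top, hu_top, add_top]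

theorem sum_ofReal_mul_lintegral_withDensity {ι : Type*} (s : Finset ι) (ν : Measure X)
    {lam : ι → ℝ} {w h : ι → X → ℝ} (hlam : ∀ i ∈ s, 0 ≤ lam i)
    (hw : ∀ i ∈ s, Measurable (w i)) (hw_nonneg : ∀ i ∈ s, ∀ x, 0 ≤ w i x)
    (hh : ∀ i ∈ s, Measurable (h i)) (hh_nonneg : ∀ i ∈ s, ∀ x, 0 ≤ h i x) :
    ∑ i ∈ s, ENNReal.ofReal (lam i) *
        ∫⁻ x, ENNReal.ofReal (h i x) ∂(ν.withDensity fun x => ENNReal.ofReal (w i x))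
      = ∫⁻ x, ENNReal.ofReal (∑ i ∈ s, lam i * w i x * h i x) ∂ν := by
  have hterm : ∀ i ∈ s, ∀ x, 0 ≤ lam i * w i x * h i x := fun i hi x =>
    mul_nonneg (mul_nonneg (hlam i hi) (hw_nonneg i hi x)) (hh_nonneg i hi x)
  rw [lintegral_congr fun x => ENNReal.ofReal_sum_of_nonneg fun i hi => hterm i hi x,
    lintegral_finsetSum (f := fun i x => ENNReal.ofReal (lam i * w i x * h i x)) _
      fun i hi => (((hw i hi).const_mul (lam i)).mul (hh i hi)).ennreal_ofReal]
  refine Finset.sum_congr rfl fun i hi => ?_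
  rw [lintegral_withDensity_eq_lintegral_mul _ (hw i hi).ennreal_ofReal (hh i hi).ennreal_ofReal,
    ← lintegral_const_mul' _ _ ENNReal.ofReal_ne_top]
  refine lintegral_congr fun x => ?_
  rw [Pi.mul_apply, ← mul_assoc, ← ENNReal.ofReal_mul (hlam i hi),
    ← ENNReal.ofReal_mul (mul_nonneg (hlam i hi) (hw_nonneg i hi x))]

end MseRisk

theorem bayes_optimal_of_mixture_covariate_shift_mse_general
    {X : Type*} [MeasurableSpace X] (ν : Measure X)
    {P : Type*} [Fintype P]
    (μ : P → Measure (X × ℝ))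
    (hY : ∀ p, ∫⁻ z, ENNReal.ofReal (z.2 ^ 2) ∂(μ p) < ∞)
    (w : P → X → ℝ) (hwMeas : ∀ p, Measurable (w p)) (hwNonneg : ∀ p x, 0 ≤ w p x)
    (hDens : ∀ p, (μ p).map Prod.fst = ν.withDensity (fun x => ENNReal.ofReal (w p x)))
    (f : P → X → ℝ) (hfMeas : ∀ p, Measurable (f p))
    (hfL2 : ∀ p, ∫⁻ x, ENNReal.ofReal (f p x ^ 2) ∂((μ p).map Prod.fst) < ∞)
    (hfOpt : ∀ p, ∀ g : X → ℝ, Measurable g → mseRisk (μ p) (f p) ≤ mseRisk (μ p) g)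
    (lam : P → ℝ) (hNonneg : ∀ p, 0 ≤ lam p) :
    ∀ g : X → ℝ, Measurable g →
      mseRisk (∑ p, ENNReal.ofReal (lam p) • μ p)
          (fun x => if 0 < ∑ q, lam q * w q x
            then (∑ p, lam p * w p x * f p x) / (∑ q, lam q * w q x) else 0)
        ≤ mseRisk (∑ p, ENNReal.ofReal (lam p) • μ p) g := by
  intro g hg
  have hweight : ∀ x, ∀ p ∈ Finset.univ, 0 ≤ lam p * w p x := fun x p _ =>
    mul_nonneg (hNonneg p) (hwNonneg p x)
  have hf_lam : (fun x => if 0 < ∑ q, lam q * w q x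
      then (∑ p, lam p * w p x * f p x) / (∑ q, lam q * w q x) else 0)
      = fun x => Finset.univ.centerMass (fun p => lam p * w p x) (fun p => f p x) :=
    funext fun x => (Finset.univ.centerMass_eq_ite (hweight x) _).symm
  have hdecomp : ∀ u : X → ℝ, Measurable u →
      mseRisk (∑ p, ENNReal.ofReal (lam p) • μ p) u
        = ∑ p, ENNReal.ofReal (lam p) * mseRisk (μ p) (f p)
          + ∫⁻ x, ENNReal.ofReal (∑ p, lam p * w p x * (u x - f p x) ^ 2) ∂ν := by
    intro u hu
    simp_rw [mseRisk_sum_smul, mseRisk_eq_add_of_forall_mseRisk_le (hfMeas _) hu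
      (mseRisk_lt_top (hfMeas _) (hfL2 _) (hY _)) (hfOpt _), mul_add, Finset.sum_add_distrib, hDens]
    rw [sum_ofReal_mul_lintegral_withDensity (h := fun p x => (u x - f p x) ^ 2) _ ν
      (fun p _ => hNonneg p) (fun p _ => hwMeas p) (fun p _ => hwNonneg p)
      (fun p _ => (hu.sub (hfMeas p)).pow_const 2) (fun p _ x => sq_nonneg _)]
  rw [hf_lam, hdecomp _ (by unfold Finset.centerMass; fun_prop), hdecomp g hg]
  refine add_le_add_right (lintegral_mono fun x => ENNReal.ofReal_le_ofReal ?_) _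
  exact Finset.univ.sum_mul_sq_centerMass_sub_le (hweight x) _ (g x)

/-- covariate shift. Let `ν` be σ-finite on `X` and for each `p` let `μ p` be
a probability measure on `X × ℝ` with square-integrable `y`, whose `X`-marginal `ρ p` has
density `w p ≥ 0` w.r.t. `ν`. Let `f p` be a square-integrable Bayes optimal (MSE-minimizing)
predictor for `μ p`. Fix `λ` in the simplex and define
`f_λ(x) = (Σ_p λ_p w_p(x) f_p(x)) / (Σ_q λ_q w_q(x))` when the denominator is positive and `0`
otherwise. Then `f_λ` minimizes the MSE risk for the mixture `Σ_p λ_p μ_p` over all measurable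
predictors. -/
theorem bayes_optimal_of_mixture_covariate_shift_mse
    {X : Type*} [MeasurableSpace X] (ν : Measure X) [SigmaFinite ν]
    {P : Type*} [Fintype P] [Nonempty P]
    (μ : P → Measure (X × ℝ)) (hProb : ∀ p, IsProbabilityMeasure (μ p))
    (hY : ∀ p, ∫⁻ z, ENNReal.ofReal (z.2 ^ 2) ∂(μ p) < ∞)
    (w : P → X → ℝ) (hwMeas : ∀ p, Measurable (w p)) (hwNonneg : ∀ p x, 0 ≤ w p x)
    (hDens : ∀ p, (μ p).map Prod.fst = ν.withDensity (fun x => ENNReal.ofReal (w p x)))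
    (f : P → X → ℝ) (hfMeas : ∀ p, Measurable (f p))
    (hfL2 : ∀ p, ∫⁻ x, ENNReal.ofReal (f p x ^ 2) ∂((μ p).map Prod.fst) < ∞)
    (hfOpt : ∀ p, ∀ g : X → ℝ, Measurable g → mseRisk (μ p) (f p) ≤ mseRisk (μ p) g)
    (lam : P → ℝ) (hNonneg : ∀ p, 0 ≤ lam p) (hSum : (∑ p, lam p) = 1) :
    ∀ g : X → ℝ, Measurable g →
      mseRisk (∑ p, ENNReal.ofReal (lam p) • μ p)
          (fun x => if 0 < ∑ q, lam q * w q x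
            then (∑ p, lam p * w p x * f p x) / (∑ q, lam q * w q x) else 0)
        ≤ mseRisk (∑ p, ENNReal.ofReal (lam p) • μ p) g :=
  bayes_optimal_of_mixture_covariate_shift_mse_general ν μ hY w hwMeas hwNonneg hDens f hfMeas hfL2
    hfOpt lam hNonneg
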